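/- Let r be a positive integer with r ≤ n. For every encoder E ∈ ℝ^{r×n} and decoder D ∈ ℝ^{n×r}, the task-aware compression loss satisfies Tr(K(I − DE) Ψ (I − DE)ᵀ Kᵀ) ≥ Σ_{i=r+1}^{n} μᵢ. -/

import Mathlib

/-!
With `Ψ = L Lᵀ` and `A = K (1 - D E) L` the loss is `tr (Aᵀ A)`. The kernel of `E L` has
dimension at least `n - r`; if the columns of `W` are an orthonormal family in it, then
`A W = K L W`, so `tr (Aᵀ A) ≥ tr (Wᵀ Aᵀ A W) = tr (Wᵀ S W)`. Diagonalising `S = Uᵀ diag μ U`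
turns this into `∑ μⱼ cⱼ`, where the `cⱼ` are the diagonal entries of the orthogonal projection
`(U W) (U W)ᵀ`: they lie in `[0, 1]` and add up to `n - r`, and such a weighted sum of the
decreasing `μⱼ` is at least the sum of the last `n - r` of them.
-/

open Matrix Finset

theorem sum_le_sum_mul_of_threshold {ι : Type*} [Fintype ι] (T : Finset ι) (ν c : ι → ℝ)
    (t : ℝ) (hT : ∀ j ∈ T, ν j ≤ t) (hTc : ∀ j ∉ T, t ≤ ν j)
    (hc : ∀ j, c j ∈ Set.Icc 0 1) (hsum : ∑ j, c j = #T) :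
    ∑ j ∈ T, ν j ≤ ∑ j, ν j * c j := by
  classical
  have key : ∑ j, ν j * c j - ∑ j ∈ T, ν j =
      ∑ j, (ν j - t) * (c j - if j ∈ T then 1 else 0) := by
    simp only [mul_sub, sub_mul, mul_ite, mul_one, mul_zero, sum_sub_distrib, sum_ite_mem,
      univ_inter, ← mul_sum, hsum, sum_const, nsmul_eq_mul]
    ring
  have hterm : ∀ j, 0 ≤ (ν j - t) * (c j - if j ∈ T then 1 else 0) := fun j => by
    by_cases hj : j ∈ T
    · rw [if_pos hj]
      exact mul_nonneg_of_nonpos_of_nonpos (by linarith [hT j hj]) (by linarith [(hc j).2])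
    · rw [if_neg hj, sub_zero]
      exact mul_nonneg (by linarith [hTc j hj]) (hc j).1
  linarith [sum_nonneg fun j (_ : j ∈ univ) => hterm j]

theorem sum_Icc_eq_sum_filter_le {M : Type*} [AddCommMonoid M] (n r : ℕ) (f : ℕ → M) :
    ∑ i ∈ Icc (r + 1) n, f i = ∑ j : Fin n with r ≤ j.val, f (j + 1) := by
  rw [sum_filter, Fin.sum_univ_eq_sum_range (fun i => if r ≤ i then f (i + 1) else 0),
    ← sum_filter, ← Ico_add_one_right_eq_Icc, ← sum_Ico_add' f r n 1]
  congr 1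
  ext i
  simp only [mem_filter, mem_range, mem_Ico]
  omega

theorem Nat.antitoneOn_Icc_of_succ_le {α : Type*} [Preorder α] {n : ℕ} {f : ℕ → α}
    (hf : ∀ i, 1 ≤ i → i < n → f (i + 1) ≤ f i) : AntitoneOn f (Set.Icc 1 n) :=
  antitoneOn_of_succ_le Set.ordConnected_Icc fun i _ hi hsi => hf i hi.1 (by
    simp only [Set.mem_Icc, Order.succ_eq_add_one] at hsi; omega)

theorem sum_Icc_le_sum_mul_of_antitoneOn {n r : ℕ} {μ : ℕ → ℝ} (hμ : AntitoneOn μ (Set.Icc 1 n))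
    {c : Fin n → ℝ} (hc : ∀ j, c j ∈ Set.Icc 0 1) (hsum : ∑ j, c j = (n - r : ℕ)) :
    ∑ i ∈ Icc (r + 1) n, μ i ≤ ∑ j : Fin n, μ (j + 1) * c j := by
  have hcard : #{j : Fin n | r ≤ j.val} = n - r := by
    have := sum_Icc_eq_sum_filter_le n r (fun _ => 1)
    simp only [sum_const, smul_eq_mul, mul_one, Nat.card_Icc] at this
    omega
  rw [sum_Icc_eq_sum_filter_le]
  -- the threshold is `μ (r + 1)`; when `n ≤ r` no index lies above it and `μ n` serves instead
  refine sum_le_sum_mul_of_threshold _ _ c (μ (min (r + 1) n)) (fun j hj => ?_) (fun j hj => ?_)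
    hc (by rw [hsum, hcard])
  all_goals
    have := j.isLt
    simp only [mem_filter, mem_univ, true_and] at hj
    refine hμ ⟨?_, ?_⟩ ⟨?_, ?_⟩ ?_ <;> omega

theorem diag_mul_transpose_mem_Icc {ι κ : Type*} [Fintype ι] [Fintype κ] [DecidableEq κ]
    {C : Matrix ι κ ℝ} (hC : Cᵀ * C = 1) (j : ι) : (C * Cᵀ) j j ∈ Set.Icc 0 1 := by
  set Q := C * Cᵀ
  have hQ : Q j j = ∑ i, Q i j ^ 2 := by
    have hQQ : Q * Q = Q := by
      simp only [Q, Matrix.mul_assoc, ← Matrix.mul_assoc Cᵀ, hC, Matrix.one_mul]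
    have hQs : Qᵀ = Q := by simp [Q, transpose_mul]
    conv_lhs => rw [← hQQ, mul_apply]
    refine sum_congr rfl fun i _ => ?_
    rw [← transpose_apply Q, hQs, sq]
  have hnonneg : 0 ≤ Q j j := hQ ▸ sum_nonneg fun i _ => sq_nonneg _
  have hsq : Q j j ^ 2 ≤ Q j j := hQ ▸ single_le_sum (fun i _ => sq_nonneg (Q i j)) (mem_univ j)
  exact ⟨hnonneg, by nlinarith⟩

theorem trace_transpose_mul_diagonal_mul {ι κ : Type*} [Fintype ι] [DecidableEq ι] [Fintype κ]
    (C : Matrix ι κ ℝ) (d : ι → ℝ) :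
    (Cᵀ * diagonal d * C).trace = ∑ j, d j * (C * Cᵀ) j j := by
  rw [Matrix.mul_assoc, trace_mul_comm, Matrix.mul_assoc]
  simp only [trace, diag_apply, diagonal_mul]

theorem of_mul_transpose_eq_one {ι : Type*} [Fintype ι] [DecidableEq ι] {u : ι → ι → ℝ}
    (hu : ∀ i j, u i ⬝ᵥ u j = if i = j then 1 else 0) : of u * (of u)ᵀ = 1 := by
  ext i j
  simpa [mul_apply, dotProduct, one_apply] using hu i j

theorem eq_transpose_mul_diagonal_mul {ι : Type*} [Fintype ι] [DecidableEq ι]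
    {S U : Matrix ι ι ℝ} {d : ι → ℝ} (hU : U * Uᵀ = 1) (hS : ∀ i, S *ᵥ U i = d i • U i) :
    S = Uᵀ * diagonal d * U := by
  have hSU : S * Uᵀ = Uᵀ * diagonal d := by
    ext x j
    have := congrFun (hS j) x
    simp only [mulVec, dotProduct, Pi.smul_apply, smul_eq_mul] at this
    rw [mul_diagonal, mul_apply, transpose_apply, mul_comm]
    simpa only [transpose_apply, mul_comm] using this
  calc S = S * (Uᵀ * U) := by rw [mul_eq_one_comm.mp hU, Matrix.mul_one]
    _ = Uᵀ * diagonal d * U := by rw [← Matrix.mul_assoc, hSU]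

theorem trace_transpose_mul_mul_le {m ι κ : Type*} [Fintype m] [Fintype ι] [DecidableEq ι]
    [Fintype κ] [DecidableEq κ] (A : Matrix m ι ℝ) {W : Matrix ι κ ℝ} (hW : Wᵀ * W = 1) :
    (Wᵀ * (Aᵀ * A) * W).trace ≤ (Aᵀ * A).trace := by
  set P := 1 - W * Wᵀ
  have hPP : P * Pᵀ = P := by
    simp only [P, transpose_sub, transpose_one, transpose_mul, transpose_transpose, Matrix.sub_mul,
      Matrix.mul_sub, Matrix.one_mul, Matrix.mul_one, Matrix.mul_assoc, ← Matrix.mul_assoc Wᵀ, hW]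
    abel
  have hdiff : (Aᵀ * A).trace - (Wᵀ * (Aᵀ * A) * W).trace = (A * P * (A * P)ᵀ).trace := by
    have hAP : A * P * (A * P)ᵀ = A * P * Aᵀ := by
      rw [transpose_mul, ← Matrix.mul_assoc, Matrix.mul_assoc A P Pᵀ, hPP]
    rw [hAP, Matrix.mul_sub, Matrix.mul_one, Matrix.sub_mul, trace_sub, trace_mul_comm A Aᵀ,
      trace_mul_cycle Wᵀ, trace_mul_cycle A, trace_mul_comm (Aᵀ * A)]
  have hpsd := posSemidef_self_mul_conjTranspose (A * P)
  rw [conjTranspose_eq_transpose_of_trivial] at hpsd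
  linarith [hpsd.trace_nonneg]

theorem exists_transpose_mul_self_eq_one_and_mul_eq_zero {ι : Type*} [Fintype ι] {n : ℕ}
    (B : Matrix ι (Fin n) ℝ) :
    ∃ W : Matrix (Fin n) (Fin (n - Fintype.card ι)) ℝ, Wᵀ * W = 1 ∧ B * W = 0 := by
  set V := LinearMap.ker (toEuclideanLin B)
  have hdim : n - Fintype.card ι ≤ Module.finrank ℝ V := by
    have h1 := (toEuclideanLin B).finrank_range_add_finrank_ker
    have h2 := Submodule.finrank_le (LinearMap.range (toEuclideanLin B))
    rw [finrank_euclideanSpace_fin] at h1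
    rw [finrank_euclideanSpace] at h2
    change _ + Module.finrank ℝ V = n at h1
    omega
  let w : Fin (n - Fintype.card ι) → EuclideanSpace ℝ (Fin n) :=
    V.subtypeₗᵢ ∘ stdOrthonormalBasis ℝ V ∘ Fin.castLE hdim
  have hw : Orthonormal ℝ w :=
    ((stdOrthonormalBasis ℝ V).orthonormal.comp _ (Fin.castLE_injective hdim)).comp_linearIsometry _
  have hBw (j) : B *ᵥ w j = 0 := by
    have := LinearMap.mem_ker.mp (stdOrthonormalBasis ℝ V (Fin.castLE hdim j)).2
    rw [toLpLin_apply] at this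
    exact congrArg WithLp.ofLp this
  refine ⟨of fun x i => w i x, ?_, ?_⟩
  · ext i j
    rw [one_apply, ← orthonormal_iff_ite.mp hw i j, PiLp.inner_apply, mul_apply]
    simp only [transpose_apply, of_apply, RCLike.inner_apply, conj_trivial]
    exact sum_congr rfl fun x _ => mul_comm _ _
  · ext a j
    simpa only [mul_apply, of_apply, Matrix.zero_apply, mulVec, dotProduct, Pi.zero_apply]
      using congrFun (hBw j) a

theorem task_aware_pca_lower_bound_general
    (n m r : ℕ)
    (Ψ L : Matrix (Fin n) (Fin n) ℝ) (hChol : Ψ = L * Lᵀ)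
    (K : Matrix (Fin m) (Fin n) ℝ)
    (μ : ℕ → ℝ) (u : Fin n → (Fin n → ℝ))
    (hdesc : ∀ i : ℕ, 1 ≤ i → i < n → μ (i + 1) ≤ μ i)
    (horth : ∀ i j : Fin n, dotProduct (u i) (u j) = if i = j then 1 else 0)
    (heig : ∀ i : Fin n, (Lᵀ * Kᵀ * K * L).mulVec (u i) = μ ((i : ℕ) + 1) • u i) :
    ∀ (E : Matrix (Fin r) (Fin n) ℝ) (D : Matrix (Fin n) (Fin r) ℝ),
      (K * (1 - D * E) * Ψ * (1 - D * E)ᵀ * Kᵀ).trace ≥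
        ∑ i ∈ Finset.Icc (r + 1) n, μ i := by
  intro E D
  set A := K * (1 - D * E) * L
  obtain ⟨W, hW, hELW⟩ := exists_transpose_mul_self_eq_one_and_mul_eq_zero (E * L)
  set U : Matrix (Fin n) (Fin n) ℝ := of u
  have hU : U * Uᵀ = 1 := of_mul_transpose_eq_one horth
  set C := U * W
  have hC : Cᵀ * C = 1 := by
    rw [transpose_mul, Matrix.mul_assoc, ← Matrix.mul_assoc Uᵀ, mul_eq_one_comm.mp hU,
      Matrix.one_mul, hW]
  have hAW : A * W = K * L * W := by
    rw [Matrix.mul_assoc] at hELW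
    simp only [A, Matrix.mul_sub, Matrix.one_mul, Matrix.sub_mul, Matrix.mul_assoc, hELW,
      Matrix.mul_zero, sub_zero]
  have hCW : Cᵀ * diagonal (fun j : Fin n => μ (j + 1)) * C = Wᵀ * (Aᵀ * A) * W := by
    calc Cᵀ * diagonal (fun j : Fin n => μ (j + 1)) * C = Wᵀ * (Lᵀ * Kᵀ * K * L) * W := by
          rw [eq_transpose_mul_diagonal_mul hU heig]; simp only [C, transpose_mul, Matrix.mul_assoc]
      _ = (A * W)ᵀ * (A * W) := by simp only [hAW, transpose_mul, Matrix.mul_assoc]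
      _ = Wᵀ * (Aᵀ * A) * W := by simp only [transpose_mul, Matrix.mul_assoc]
  rw [ge_iff_le]
  calc ∑ i ∈ Icc (r + 1) n, μ i ≤ ∑ j : Fin n, μ (j + 1) * (C * Cᵀ) j j := by
        refine sum_Icc_le_sum_mul_of_antitoneOn (Nat.antitoneOn_Icc_of_succ_le hdesc)
          (diag_mul_transpose_mem_Icc hC) ?_
        change (C * Cᵀ).trace = _
        rw [trace_mul_comm, hC, trace_one, Fintype.card_fin, Fintype.card_fin]
    _ = (Wᵀ * (Aᵀ * A) * W).trace := by rw [← hCW, trace_transpose_mul_diagonal_mul]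
    _ ≤ (Aᵀ * A).trace := trace_transpose_mul_mul_le A hW
    _ = _ := by
        rw [trace_mul_comm, hChol]; simp only [A, transpose_mul, Matrix.mul_assoc]

/-- task-aware PCA lower bound: for every encoder `E ∈ ℝ^{r×n}`
and decoder `D ∈ ℝ^{n×r}`, the task-aware compression loss
`Tr (K (I - D E) Ψ (I - D E)ᵀ Kᵀ)` is at least the sum of the bottom `n - r`
eigenvalues `μ_{r+1} + ⋯ + μ_n` of the Gram matrix `S = Lᵀ Kᵀ K L`.
Eigenvalues are 1-indexed via `μ : ℕ → ℝ`, listed in descending order with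
orthonormal eigenvectors `u`. -/
theorem task_aware_pca_lower_bound
    (n m r : ℕ) (hn : 0 < n) (hm : 0 < m) (hr : 0 < r) (hrn : r ≤ n)
    (Ψ L : Matrix (Fin n) (Fin n) ℝ) (hΨ : Ψ.PosDef) (hChol : Ψ = L * Lᵀ)
    (hLtri : ∀ i j : Fin n, i < j → L i j = 0) (hLdiag : ∀ i : Fin n, 0 < L i i)
    (K : Matrix (Fin m) (Fin n) ℝ)
    (μ : ℕ → ℝ) (u : Fin n → (Fin n → ℝ))
    (hdesc : ∀ i : ℕ, 1 ≤ i → i < n → μ (i + 1) ≤ μ i)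
    (hzero : μ (n + 1) = 0)
    (horth : ∀ i j : Fin n, dotProduct (u i) (u j) = if i = j then 1 else 0)
    (heig : ∀ i : Fin n, (Lᵀ * Kᵀ * K * L).mulVec (u i) = μ ((i : ℕ) + 1) • u i) :
    ∀ (E : Matrix (Fin r) (Fin n) ℝ) (D : Matrix (Fin n) (Fin r) ℝ),
      (K * (1 - D * E) * Ψ * (1 - D * E)ᵀ * Kᵀ).trace ≥
        ∑ i ∈ Finset.Icc (r + 1) n, μ i :=
  task_aware_pca_lower_bound_general n m r Ψ L hChol K μ u hdesc horth heig
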